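/- Let D be a multidigraph containing two parallel edges e and f (same source and same target). Then e is a shedding vertex of the directed tree complex DT(D): every facet of del_{DT(D)}(e) is also a facet of DT(D). The same statement holds for the directed linear forest complex Dlf(D). -/
import Mathlib


namespace ArXiv

/-! ## Multidigraphs and their directed-forest complexes.
A multidigraph on vertex type `V` with edge type `E` is given by source and
target maps `s t : E → V`. -/

/-- `σ` induces a directed cycle (of some length `n ≥ 1`) in the multidigraph `(s, t)`:
its edges can be arranged cyclically, with pairwise distinct sources, the target of each
edge being the source of the next one. -/
def IsDirCycle {V E : Type} (s t : E → V) (n : ℕ) (σ : Finset E) : Prop :=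
  0 < n ∧ ∃ g : ZMod n → E, Function.Injective g ∧
    (∀ e, e ∈ σ ↔ ∃ i, g i = e) ∧
    Function.Injective (fun i => s (g i)) ∧
    (∀ i, t (g i) = s (g (i + 1)))

/-- No subset of `σ` induces a directed cycle. -/
def NoDirCycleIn {V E : Type} (s t : E → V) (σ : Finset E) : Prop :=
  ∀ (n : ℕ) (τ : Finset E), τ ⊆ σ → ¬ IsDirCycle s t n τ

/-- `σ` induces a vertex-disjoint union of directed paths: all sources are distinct,
all targets are distinct, and there is no directed cycle inside `σ`. -/
def IsLinearForest {V E : Type} (s t : E → V) (σ : Finset E) : Prop :=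
  (∀ e ∈ σ, ∀ f ∈ σ, e ≠ f → s e ≠ s f) ∧
  (∀ e ∈ σ, ∀ f ∈ σ, e ≠ f → t e ≠ t f) ∧
  NoDirCycleIn s t σ

/-- `σ` induces a directed forest: no two distinct edges share a target and there is
no directed cycle inside `σ`. -/
def IsDirForest {V E : Type} (s t : E → V) (σ : Finset E) : Prop :=
  (∀ e ∈ σ, ∀ f ∈ σ, e ≠ f → t e ≠ t f) ∧
  NoDirCycleIn s t σ

/-- The directed linear forest complex `Dlf(D)`, as its set of faces. -/
def Dlf {V E : Type} (s t : E → V) : Set (Finset E) := {σ | IsLinearForest s t σ}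

/-- The directed tree complex `DT(D)`, as its set of faces. -/
def DT {V E : Type} (s t : E → V) : Set (Finset E) := {σ | IsDirForest s t σ}

/-- The edges `e` and `f` have the same unordered pair of endpoints. -/
def SameEnds {V E : Type} (s t : E → V) (e f : E) : Prop :=
  (s e = s f ∧ t e = t f) ∨ (s e = t f ∧ t e = s f)

/-- Adjacency in the linear-forest conflict graph `G^lf_D`. -/
def LFAdj {V E : Type} (s t : E → V) (e f : E) : Prop :=
  e ≠ f ∧ (s e = s f ∨ t e = t f ∨ SameEnds s t e f)

/-- Adjacency in the tree conflict graph `G^t_D`. -/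
def TAdj {V E : Type} (s t : E → V) (e f : E) : Prop :=
  e ≠ f ∧ (t e = t f ∨ SameEnds s t e f)

/-- `σ` is an independent set for the adjacency relation `A`. -/
def IndepIn {E : Type} (A : E → E → Prop) (σ : Finset E) : Prop :=
  ∀ e ∈ σ, ∀ f ∈ σ, ¬ A e f

/-- `D` has no directed cycle of length at least 3 (directed 2-cycles are allowed). -/
def TwoAcyclic {V E : Type} (s t : E → V) : Prop :=
  ∀ (n : ℕ) (σ : Finset E), 3 ≤ n → ¬ IsDirCycle s t n σ

/-- `D` has no directed cycles at all. -/
def Acyclic {V E : Type} (s t : E → V) : Prop :=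
  ∀ (n : ℕ) (σ : Finset E), ¬ IsDirCycle s t n σ

/-- Adjacency in the underlying (simple, undirected) graph of `D`. -/
def UAdj {V E : Type} (s t : E → V) (u v : V) : Prop :=
  u ≠ v ∧ ∃ e, (s e = u ∧ t e = v) ∨ (s e = v ∧ t e = u)

/-- The underlying graph of `D` is a forest: it contains no cycle of length `≥ 3`. -/
def UnderlyingForest {V E : Type} (s t : E → V) : Prop :=
  ¬ ∃ m : ℕ, 3 ≤ m ∧ ∃ h : ZMod m → V, Function.Injective h ∧
    ∀ i, UAdj s t (h i) (h (i + 1))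

/-- An alternating closed trail: a cyclic sequence of distinct edges in which any two
cyclically consecutive edges share a source or share a target. -/
def HasAltClosedTrail {V E : Type} (s t : E → V) : Prop :=
  ∃ k : ℕ, 2 ≤ k ∧ ∃ g : ZMod k → E, Function.Injective g ∧
    ∀ i, s (g i) = s (g (i + 1)) ∨ t (g i) = t (g (i + 1))

/-- `D` has no induced subgraph isomorphic to `L₂`, the double directed string on
three vertices. -/
def IsL2Free {V E : Type} (s t : E → V) : Prop :=
  ¬ ∃ a b c : V, a ≠ b ∧ b ≠ c ∧ a ≠ c ∧
    ∃ e1 e2 e3 e4 : E,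
      e1 ≠ e2 ∧ e1 ≠ e3 ∧ e1 ≠ e4 ∧ e2 ≠ e3 ∧ e2 ≠ e4 ∧ e3 ≠ e4 ∧
      s e1 = a ∧ t e1 = b ∧ s e2 = b ∧ t e2 = a ∧
      s e3 = b ∧ t e3 = c ∧ s e4 = c ∧ t e4 = b ∧
      ∀ f : E, s f ∈ ({a, b, c} : Set V) → t f ∈ ({a, b, c} : Set V) →
        f ∈ ({e1, e2, e3, e4} : Set E)

/-- The relation `A` (a graph on `β`) has an induced cycle of length at least 4. -/
def HasInducedCycleGE4 {β : Type} (A : β → β → Prop) : Prop :=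
  ∃ n : ℕ, 4 ≤ n ∧ ∃ g : ZMod n → β, Function.Injective g ∧
    ∀ i j : ZMod n, i ≠ j → (A (g i) (g j) ↔ j = i + 1 ∨ i = j + 1)

/-! ## Simplicial complexes (as sets of faces). -/

/-- `σ` is a facet (inclusion-maximal face) of `Δ`. -/
def IsFacetOf {α : Type} (Δ : Set (Finset α)) (σ : Finset α) : Prop :=
  σ ∈ Δ ∧ ∀ τ ∈ Δ, σ ⊆ τ → σ = τ

/-- Deletion of the vertex `v` in `Δ`. -/
def delC {α : Type} (Δ : Set (Finset α)) (v : α) : Set (Finset α) :=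
  {τ ∈ Δ | v ∉ τ}

/-- Link of the vertex `v` in `Δ`. -/
def linkC {α : Type} [DecidableEq α] (Δ : Set (Finset α)) (v : α) : Set (Finset α) :=
  {τ | τ ∈ Δ ∧ v ∉ τ ∧ insert v τ ∈ Δ}

/-- `v` is a shedding vertex: every facet of the deletion is a facet of `Δ`. -/
def SheddingVertex {α : Type} (Δ : Set (Finset α)) (v : α) : Prop :=
  ∀ σ, IsFacetOf (delC Δ v) σ → IsFacetOf Δ σ

/-- Vertex decomposability. -/
inductive VertexDecomposable {α : Type} [DecidableEq α] : Set (Finset α) → Prop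
  | void : VertexDecomposable (∅ : Set (Finset α))
  | simplex (σ : Finset α) : VertexDecomposable {τ | τ ⊆ σ}
  | shed (Δ : Set (Finset α)) (v : α) :
      VertexDecomposable (linkC Δ v) → VertexDecomposable (delC Δ v) →
      SheddingVertex Δ v → VertexDecomposable Δ

/-- Shellability (in the non-pure sense of Björner–Wachs). -/
def Shellable {α : Type} (Δ : Set (Finset α)) : Prop :=
  ∃ (m : ℕ) (F : Fin m → Finset α), Function.Injective F ∧
    (∀ σ, IsFacetOf Δ σ ↔ ∃ i, F i = σ) ∧
    ∀ i : Fin m, 0 < (i : ℕ) → ∀ τ : Finset α, τ ⊆ F i → (∃ j, j < i ∧ τ ⊆ F j) →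
      ∃ ρ : Finset α, ρ ⊆ F i ∧ (∃ j, j < i ∧ ρ ⊆ F j) ∧
        ρ.card + 1 = (F i).card ∧ τ ⊆ ρ

/-- The pure `d`-skeleton of `Δ`: the subcomplex generated by the `d`-dimensional faces. -/
def pureSkel {α : Type} (Δ : Set (Finset α)) (d : ℕ) : Set (Finset α) :=
  {τ | ∃ σ ∈ Δ, σ.card = d + 1 ∧ τ ⊆ σ}

/-- Link of a face `σ` in `Δ`. -/
def linkFaceC {α : Type} [DecidableEq α] (Δ : Set (Finset α)) (σ : Finset α) :
    Set (Finset α) :=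
  {τ | τ ∩ σ = ∅ ∧ τ ∪ σ ∈ Δ}

/-- Connectivity of a simplicial complex: any two vertices are joined by an edge path. -/
def ComplexConnected {α : Type} [DecidableEq α] (Δ : Set (Finset α)) : Prop :=
  ∀ u v : α, ({u} : Finset α) ∈ Δ → ({v} : Finset α) ∈ Δ →
    Relation.ReflTransGen (fun a b => ({a, b} : Finset α) ∈ Δ) u v

/-! ## Simplicial homology via ordered chains, and (sequential) Cohen–Macaulayness. -/

/-- A chain (a function on ordered tuples) is supported on faces of `Δ`. -/
def validChain {α K : Type} [DecidableEq α] [Field K] {k : ℕ}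
    (Δ : Set (Finset α)) (c : (Fin k → α) → K) : Prop :=
  ∀ g, c g ≠ 0 → (Finset.univ.image g) ∈ Δ

/-- The simplicial boundary operator on ordered chains. -/
def bdry {α K : Type} [Fintype α] [Field K] {k : ℕ}
    (c : (Fin (k + 2) → α) → K) : (Fin (k + 1) → α) → K :=
  fun g => ∑ j : Fin (k + 2), (-1 : K) ^ (j : ℕ) * ∑ v : α, c (Fin.insertNth j v g)

/-- Vanishing of the `i`-th reduced simplicial homology of `Δ` with coefficients in `K`
(computed with ordered chains; degree `0` uses the augmentation). -/
def RHomZero (α K : Type) [Fintype α] [DecidableEq α] [Field K]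
    (Δ : Set (Finset α)) : ℕ → Prop
  | 0 => ∀ c : (Fin 1 → α) → K, validChain Δ c → (∑ g : Fin 1 → α, c g) = 0 →
      ∃ b : (Fin 2 → α) → K, validChain Δ b ∧ bdry b = c
  | (i + 1) => ∀ c : (Fin (i + 2) → α) → K, validChain Δ c → bdry c = 0 →
      ∃ b : (Fin (i + 3) → α) → K, validChain Δ b ∧ bdry b = c

/-- `Δ` is Cohen–Macaulay over `K`: for every face `σ`, the reduced homology of its
link vanishes in all degrees strictly below the dimension of the link. -/
def IsCM (α K : Type) [Fintype α] [DecidableEq α] [Field K]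
    (Δ : Set (Finset α)) : Prop :=
  ∀ σ ∈ Δ, ∀ i : ℕ, (∃ τ ∈ linkFaceC Δ σ, i + 2 ≤ τ.card) →
    RHomZero α K (linkFaceC Δ σ) i

/-- `Δ` is sequentially Cohen–Macaulay over `K`: every pure skeleton is Cohen–Macaulay. -/
def IsSCM (α K : Type) [Fintype α] [DecidableEq α] [Field K]
    (Δ : Set (Finset α)) : Prop :=
  ∀ d : ℕ, IsCM α K (pureSkel Δ d)

/-! ## The double directed string `Lₙ` and the double directed cycle `Pₙ`. -/

/-- Source map of `Lₙ`: `inl i` is the edge `i → i+1`, `inr i` the edge `i+1 → i`. -/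
def sL (n : ℕ) : Fin n ⊕ Fin n → Fin (n + 1) := Sum.elim Fin.castSucc Fin.succ

/-- Target map of `Lₙ`. -/
def tL (n : ℕ) : Fin n ⊕ Fin n → Fin (n + 1) := Sum.elim Fin.succ Fin.castSucc

/-- Source map of `Pₙ`: `inl i` is the edge `eᵢ : i → i+1`, `inr i` is `eᵢ' : i+1 → i`. -/
def sP (n : ℕ) : ZMod n ⊕ ZMod n → ZMod n := Sum.elim id (fun i => i + 1)

/-- Target map of `Pₙ`. -/
def tP (n : ℕ) : ZMod n ⊕ ZMod n → ZMod n := Sum.elim (fun i => i + 1) id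


section Aux

variable {V E : Type} [DecidableEq E] {s t : E → V} {e f : E}

lemma noCyc_mono {σ' σ : Finset E} (h : σ' ⊆ σ) (hσ : NoDirCycleIn s t σ) :
    NoDirCycleIn s t σ' := fun n τ hτ => hσ n τ (hτ.trans h)

open Finset in
lemma swap_noCyc (hef : e ≠ f) (hs : s e = s f) (ht : t e = t f)
    {σ : Finset E} (he : e ∉ σ)
    (h : NoDirCycleIn s t (insert e σ)) : NoDirCycleIn s t (insert f σ) := by
  classical
  intro n τ hτ hcyc
  obtain ⟨hn, g, hginj, hgmem, hsinj, hnext⟩ := hcyc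
  have heτ : e ∉ τ := fun hmem => by
    rcases Finset.mem_insert.mp (hτ hmem) with h1 | h1
    · exact hef h1
    · exact he h1
  set sw : E → E := fun x => if x = f then e else x with hsw
  have hsws : ∀ x, s (sw x) = s x := by
    intro x; by_cases hx : x = f <;> simp [sw, hx, hs]
  have hswt : ∀ x, t (sw x) = t x := by
    intro x; by_cases hx : x = f <;> simp [sw, hx, ht]
  refine h n (τ.image sw) ?_ ⟨hn, sw ∘ g, ?_, ?_, ?_, ?_⟩
  · intro x hx
    obtain ⟨y, hy, rfl⟩ := Finset.mem_image.mp hx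
    by_cases hyf : y = f
    · simp [sw, hyf]
    · have : y ∈ insert f σ := hτ hy
      rcases Finset.mem_insert.mp this with h1 | h1
      · exact absurd h1 hyf
      · simpa [sw, hyf] using Finset.mem_insert_of_mem h1
  · intro i j hij
    simp only [Function.comp] at hij
    by_cases hi : g i = f <;> by_cases hj : g j = f
    · exact hginj (hi.trans hj.symm)
    · exfalso
      have : e = g j := by simpa [sw, hi, hj] using hij
      exact heτ (this ▸ (hgmem (g j)).mpr ⟨j, rfl⟩)
    · exfalso
      have : g i = e := by simpa [sw, hi, hj] using hij
      exact heτ (this ▸ (hgmem (g i)).mpr ⟨i, rfl⟩)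
    · exact hginj (by simpa [sw, hi, hj] using hij)
  · intro x
    simp only [Finset.mem_image, Function.comp]
    constructor
    · rintro ⟨y, hy, rfl⟩
      obtain ⟨i, rfl⟩ := (hgmem y).mp hy
      exact ⟨i, rfl⟩
    · rintro ⟨i, rfl⟩
      exact ⟨g i, (hgmem (g i)).mpr ⟨i, rfl⟩, rfl⟩
  · have : (fun i => s ((sw ∘ g) i)) = fun i => s (g i) := by
      funext i; exact hsws (g i)
    rw [this]; exact hsinj
  · intro i
    simp only [Function.comp]
    rw [hswt, hsws]; exact hnext i

open Finset in
lemma swap_inj_on {m : E → V} (hm : m e = m f) {σ : Finset E}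
    (he : e ∉ σ) (hef : e ≠ f)
    (h : ∀ a ∈ insert e σ, ∀ b ∈ insert e σ, a ≠ b → m a ≠ m b) :
    ∀ a ∈ insert f σ, ∀ b ∈ insert f σ, a ≠ b → m a ≠ m b := by
  intro a ha b hb hab
  rcases Finset.mem_insert.mp ha with rfl | ha' <;>
    rcases Finset.mem_insert.mp hb with rfl | hb'
  · exact absurd rfl hab
  · rw [← hm]
    exact h e (Finset.mem_insert_self e σ) b (Finset.mem_insert_of_mem hb')
      (fun hh => he (hh ▸ hb'))
  · rw [← hm]
    exact (h e (Finset.mem_insert_self e σ) a (Finset.mem_insert_of_mem ha')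
      (fun hh => he (hh ▸ ha'))).symm
  · exact h a (Finset.mem_insert_of_mem ha') b (Finset.mem_insert_of_mem hb') hab

lemma shed_of (Δ : Set (Finset E)) (e f : E) (hef : e ≠ f)
    (hdown : ∀ τ σ : Finset E, τ ⊆ σ → σ ∈ Δ → τ ∈ Δ)
    (hswap : ∀ σ : Finset E, e ∉ σ → insert e σ ∈ Δ → insert f σ ∈ Δ ∧ f ∉ σ) :
    SheddingVertex Δ e := by
  classical
  rintro σ ⟨⟨hσ, heσ⟩, hmax⟩
  refine ⟨hσ, fun τ hτ hsub => ?_⟩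
  by_contra hne
  obtain ⟨x, hxτ, hxσ⟩ := Finset.exists_of_ssubset (hsub.ssubset_of_ne hne)
  have hins : insert x σ ∈ Δ := hdown _ τ (Finset.insert_subset hxτ hsub) hτ
  by_cases hx : x = e
  · subst hx
    obtain ⟨hfΔ, hfσ⟩ := hswap σ heσ hins
    have hxne : x ∉ insert f σ := by
      simp only [Finset.mem_insert]
      rintro (rfl | h)
      · exact hef rfl
      · exact heσ h
    have := hmax (insert f σ) ⟨hfΔ, hxne⟩ (Finset.subset_insert f σ)
    exact hfσ (this ▸ Finset.mem_insert_self f σ)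
  · have hxne : e ∉ insert x σ := by
      simp only [Finset.mem_insert]
      rintro (rfl | h)
      · exact hx rfl
      · exact heσ h
    have := hmax (insert x σ) ⟨hins, hxne⟩ (Finset.subset_insert x σ)
    exact hxσ (this ▸ Finset.mem_insert_self x σ)

end Aux

/-- If `e` and `f` are parallel edges of `D`, then `e` is a shedding
vertex of both `DT(D)` and `Dlf(D)`. -/
theorem statement_15 {V E : Type} (s t : E → V) (e f : E)
    (hef : e ≠ f) (hs : s e = s f) (ht : t e = t f) :
    SheddingVertex (DT s t) e ∧ SheddingVertex (Dlf s t) e := by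
  classical
  constructor
  · refine shed_of _ e f hef ?_ ?_
    · rintro τ σ hsub ⟨ht', hc⟩
      exact ⟨fun a ha b hb hab => ht' a (hsub ha) b (hsub hb) hab, noCyc_mono hsub hc⟩
    · rintro σ heσ ⟨ht', hc⟩
      have hfσ : f ∉ σ := fun hf =>
        ht' e (Finset.mem_insert_self e σ) f (Finset.mem_insert_of_mem hf) hef ht
      exact ⟨⟨swap_inj_on ht heσ hef ht', swap_noCyc hef hs ht heσ hc⟩, hfσ⟩
  · refine shed_of _ e f hef ?_ ?_
    · rintro τ σ hsub ⟨hs', ht', hc⟩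
      exact ⟨fun a ha b hb hab => hs' a (hsub ha) b (hsub hb) hab,
        fun a ha b hb hab => ht' a (hsub ha) b (hsub hb) hab, noCyc_mono hsub hc⟩
    · rintro σ heσ ⟨hs', ht', hc⟩
      have hfσ : f ∉ σ := fun hf =>
        ht' e (Finset.mem_insert_self e σ) f (Finset.mem_insert_of_mem hf) hef ht
      exact ⟨⟨swap_inj_on hs heσ hef hs', swap_inj_on ht heσ hef ht',
        swap_noCyc hef hs ht heσ hc⟩, hfσ⟩

end ArXiv
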